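/- arXiv:2601.14158 — 2 statements merged into one kernel-verified Lean document; each statement's English description precedes it below -/
import Mathlib

section
/- Local Diagonalization Lemma: Let d1, d2 ≥ 1 and let C be a Hermitian (d1·d2)×(d1·d2) complex matrix regarded as acting on ℂ^{d1}⊗ℂ^{d2}. Then there exist unitary matrices U2 ∈ U(d1) and U1 ∈ U(d2) such that the matrix Ĉ := (U2⊗U1) C (U2⊗U1)* satisfies: (i) Ĉ has the same eigenvalues (with multiplicity) as C; (ii) for i = 1, 2, tr_i[Ĉ] has the same eigenvalues (with multiplicity) as tr_i[C]; (iii) tr_1[Ĉ] and tr_2[Ĉ] are diagonal matrices; (iv) writing ĉ_k for the k-th diagonal entry of Ĉ (lexicographic index k = (i−1)d2 + s for the pair (i,s)), the multiset of eigenvalues of tr_1[C] equals { Σ_{s=1}^{d1} ĉ_{(s−1)d2+i} : i = 1, …, d2 } and the multiset of eigenvalues of tr_2[C] equals { Σ_{s=1}^{d2} ĉ_{(j−1)d2+s} : j = 1, …, d1 }. -/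
open Matrix Finset Kronecker
open scoped ComplexOrder

/-- The first partial trace of a matrix on `ℂ^{d1} ⊗ ℂ^{d2}` (index pairs `(i,s)` ordered
lexicographically): `(tr_1 C)_{s,t} = ∑_i C_{(i,s),(i,t)}`. -/
noncomputable def ptrace1 {d1 d2 : ℕ} (C : Matrix (Fin d1 × Fin d2) (Fin d1 × Fin d2) ℂ) :
    Matrix (Fin d2) (Fin d2) ℂ :=
  Matrix.of fun s t => ∑ i : Fin d1, C (i, s) (i, t)

/-- The second partial trace: `(tr_2 C)_{i,j} = ∑_s C_{(i,s),(j,s)}`. -/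
noncomputable def ptrace2 {d1 d2 : ℕ} (C : Matrix (Fin d1 × Fin d2) (Fin d1 × Fin d2) ℂ) :
    Matrix (Fin d1) (Fin d1) ℂ :=
  Matrix.of fun i j => ∑ s : Fin d2, C (i, s) (j, s)

/-- The sum of the `k` largest entries of the vector `x` (the largest value of a sum of `k`
entries of `x`), i.e. `∑_{i=1}^k x_i^↓`. -/
noncomputable def maxSum {ι : Type*} [Fintype ι] (x : ι → ℝ) (k : ℕ) : ℝ :=
  sSup {s : ℝ | ∃ A : Finset ι, A.card = k ∧ s = ∑ i ∈ A, x i}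

/-- `x ≺ y` (majorization): for every `k`, the sum of the `k` largest entries of `x` is at
most the sum of the `k` largest entries of `y`, and the total sums are equal. -/
def Majorizes {ι κ : Type*} [Fintype ι] [Fintype κ] (x : ι → ℝ) (y : κ → ℝ) : Prop :=
  (∀ k : ℕ, maxSum x k ≤ maxSum y k) ∧ ∑ i, x i = ∑ j, y j

/-- `x ≺_w y` (weak majorization). -/
def WeakMajorizes {ι κ : Type*} [Fintype ι] [Fintype κ] (x : ι → ℝ) (y : κ → ℝ) : Prop :=
  ∀ k : ℕ, maxSum x k ≤ maxSum y k

/-!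
Take `U₂`, `U₁` to be the inverse eigenvector unitaries of `tr₂ C` and `tr₁ C`. The partial trace
over one factor is cyclic in that factor and equivariant for the other, so conjugating by
`U₂ ⊗ U₁` conjugates `tr₁ C` by `U₁` alone and `tr₂ C` by `U₂` alone: both partial traces of `Ĉ`
become the diagonal matrices of eigenvalues, whose diagonal entries are the sums in (iv).
Unitary conjugation preserves characteristic polynomials, hence spectra.
-/

section PartialTrace

variable {d1 d2 : ℕ}

theorem ptrace1_one_kronecker_mul_mul (B B' : Matrix (Fin d2) (Fin d2) ℂ)
    (C : Matrix (Fin d1 × Fin d2) (Fin d1 × Fin d2) ℂ) :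
    ptrace1 ((1 ⊗ₖ B) * C * (1 ⊗ₖ B')) = B * ptrace1 C * B' := by
  ext s t
  simp only [ptrace1, Matrix.mul_apply, kroneckerMap_apply, one_apply, ite_mul, one_mul, zero_mul,
    Fintype.sum_prod_type, sum_ite_irrel, sum_const_zero, sum_ite_eq, mem_univ, ↓reduceIte,
    mul_ite, sum_mul, mul_zero, sum_ite_eq', of_apply, mul_sum]
  rw [Finset.sum_comm]
  exact Finset.sum_congr rfl fun _ _ => Finset.sum_comm

theorem ptrace2_kronecker_one_mul_mul (A A' : Matrix (Fin d1) (Fin d1) ℂ)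
    (C : Matrix (Fin d1 × Fin d2) (Fin d1 × Fin d2) ℂ) :
    ptrace2 ((A ⊗ₖ 1) * C * (A' ⊗ₖ 1)) = A * ptrace2 C * A' := by
  ext i j
  simp only [ptrace2, Matrix.mul_apply, kroneckerMap_apply, one_apply, mul_ite, mul_one, mul_zero,
    ite_mul, zero_mul, Fintype.sum_prod_type, sum_ite_eq, sum_ite_eq', mem_univ, ↓reduceIte,
    of_apply, sum_mul, mul_sum]
  rw [Finset.sum_comm]
  exact Finset.sum_congr rfl fun _ _ => Finset.sum_comm

theorem ptrace1_kronecker_one_mul_comm (A : Matrix (Fin d1) (Fin d1) ℂ)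
    (C : Matrix (Fin d1 × Fin d2) (Fin d1 × Fin d2) ℂ) :
    ptrace1 ((A ⊗ₖ 1) * C) = ptrace1 (C * (A ⊗ₖ 1)) := by
  ext s t
  simp only [ptrace1, Matrix.mul_apply, kroneckerMap_apply, one_apply, mul_ite, mul_one, mul_zero,
    ite_mul, zero_mul, Fintype.sum_prod_type, sum_ite_eq, mem_univ, ↓reduceIte, of_apply,
    sum_ite_eq']
  rw [Finset.sum_comm]
  simp only [mul_comm]

theorem ptrace2_one_kronecker_mul_comm (B : Matrix (Fin d2) (Fin d2) ℂ)
    (C : Matrix (Fin d1 × Fin d2) (Fin d1 × Fin d2) ℂ) :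
    ptrace2 ((1 ⊗ₖ B) * C) = ptrace2 (C * (1 ⊗ₖ B)) := by
  ext i j
  simp only [ptrace2, Matrix.mul_apply, kroneckerMap_apply, one_apply, ite_mul, one_mul, zero_mul,
    Fintype.sum_prod_type, sum_ite_irrel, sum_const_zero, sum_ite_eq, mem_univ, ↓reduceIte,
    of_apply, mul_ite, mul_zero, sum_ite_eq']
  rw [Finset.sum_comm]
  simp only [mul_comm]

theorem ptrace1_kronecker_conj {A : Matrix (Fin d1) (Fin d1) ℂ}
    (hA : A ∈ unitaryGroup (Fin d1) ℂ) (B : Matrix (Fin d2) (Fin d2) ℂ)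
    (C : Matrix (Fin d1 × Fin d2) (Fin d1 × Fin d2) ℂ) :
    ptrace1 ((A ⊗ₖ B) * C * (A ⊗ₖ B)ᴴ) = B * ptrace1 C * Bᴴ := by
  have hA' : Aᴴ * A = 1 := mem_unitaryGroup_iff'.mp hA
  calc ptrace1 ((A ⊗ₖ B) * C * (A ⊗ₖ B)ᴴ)
      = ptrace1 ((1 ⊗ₖ B) * ((A ⊗ₖ 1) * (C * (Aᴴ ⊗ₖ 1))) * (1 ⊗ₖ Bᴴ)) := by
        rw [← one_mul A, ← mul_one B, mul_kronecker_mul, conjTranspose_mul, conjTranspose_kronecker,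
          conjTranspose_kronecker, conjTranspose_one, conjTranspose_one]
        simp only [one_mul, mul_one, mul_assoc]
    _ = B * ptrace1 (C * (Aᴴ ⊗ₖ 1) * (A ⊗ₖ 1)) * Bᴴ := by
        rw [ptrace1_one_kronecker_mul_mul, ptrace1_kronecker_one_mul_comm]
    _ = B * ptrace1 C * Bᴴ := by
        rw [mul_assoc C, ← mul_kronecker_mul, hA', one_mul, one_kronecker_one, mul_one]

theorem ptrace2_kronecker_conj (A : Matrix (Fin d1) (Fin d1) ℂ) {B : Matrix (Fin d2) (Fin d2) ℂ}
    (hB : B ∈ unitaryGroup (Fin d2) ℂ) (C : Matrix (Fin d1 × Fin d2) (Fin d1 × Fin d2) ℂ) :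
    ptrace2 ((A ⊗ₖ B) * C * (A ⊗ₖ B)ᴴ) = A * ptrace2 C * Aᴴ := by
  have hB' : Bᴴ * B = 1 := mem_unitaryGroup_iff'.mp hB
  calc ptrace2 ((A ⊗ₖ B) * C * (A ⊗ₖ B)ᴴ)
      = ptrace2 ((A ⊗ₖ 1) * ((1 ⊗ₖ B) * (C * (1 ⊗ₖ Bᴴ))) * (Aᴴ ⊗ₖ 1)) := by
        rw [← mul_one A, ← one_mul B, mul_kronecker_mul, conjTranspose_mul, conjTranspose_kronecker,
          conjTranspose_kronecker, conjTranspose_one, conjTranspose_one]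
        simp only [one_mul, mul_one, mul_assoc]
    _ = A * ptrace2 (C * (1 ⊗ₖ Bᴴ) * (1 ⊗ₖ B)) * Aᴴ := by
        rw [ptrace2_kronecker_one_mul_mul, ptrace2_one_kronecker_mul_comm]
    _ = A * ptrace2 C * Aᴴ := by
        rw [mul_assoc C, ← mul_kronecker_mul, hB', one_mul, one_kronecker_one, mul_one]

end PartialTrace

namespace Matrix

variable {𝕜 : Type*} [RCLike 𝕜] {n : Type*} [Fintype n] [DecidableEq n]

theorem charpoly_conj_of_mem_unitaryGroup {U : Matrix n n 𝕜} (hU : U ∈ unitaryGroup n 𝕜)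
    (A : Matrix n n 𝕜) : (U * A * Uᴴ).charpoly = A.charpoly := by
  rw [charpoly_mul_comm, ← mul_assoc, ← star_eq_conjTranspose, mem_unitaryGroup_iff'.mp hU,
    one_mul]

-- `eigenvalues` lists the spectrum in decreasing order, so equal spectra give equal functions.
theorem IsHermitian.eigenvalues_eq_of_conj {A B : Matrix n n 𝕜} (hA : A.IsHermitian)
    (hB : B.IsHermitian) {U : Matrix n n 𝕜} (hU : U ∈ unitaryGroup n 𝕜) (h : A = U * B * Uᴴ) :
    hA.eigenvalues = hB.eigenvalues :=
  (hA.eigenvalues_eq_eigenvalues_iff hB).2 (h ▸ charpoly_conj_of_mem_unitaryGroup hU B)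

theorem IsHermitian.star_eigenvectorUnitary_conj {A : Matrix n n 𝕜} (hA : A.IsHermitian) :
    (star hA.eigenvectorUnitary : Matrix n n 𝕜) * A * (star hA.eigenvectorUnitary : Matrix n n 𝕜)ᴴ
      = diagonal (RCLike.ofReal ∘ hA.eigenvalues) :=
  hA.conjStarAlgAut_star_eigenvectorUnitary

end Matrix

theorem local_diagonalization_general (d1 d2 : ℕ)
    (C : Matrix (Fin d1 × Fin d2) (Fin d1 × Fin d2) ℂ) (hC : C.IsHermitian)
    (htr1 : (ptrace1 C).IsHermitian) (htr2 : (ptrace2 C).IsHermitian) :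
    ∃ (U2 : Matrix (Fin d1) (Fin d1) ℂ) (U1 : Matrix (Fin d2) (Fin d2) ℂ),
      U2 ∈ Matrix.unitaryGroup (Fin d1) ℂ ∧
      U1 ∈ Matrix.unitaryGroup (Fin d2) ℂ ∧
      ∀ (hChat : ((U2 ⊗ₖ U1) * C * (U2 ⊗ₖ U1)ᴴ).IsHermitian)
        (h1hat : (ptrace1 ((U2 ⊗ₖ U1) * C * (U2 ⊗ₖ U1)ᴴ)).IsHermitian)
        (h2hat : (ptrace2 ((U2 ⊗ₖ U1) * C * (U2 ⊗ₖ U1)ᴴ)).IsHermitian),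
        -- (i) `Ĉ` has the same eigenvalues (with multiplicity) as `C`
        (∃ σ : Equiv.Perm (Fin d1 × Fin d2),
            ∀ k, hChat.eigenvalues k = hC.eigenvalues (σ k)) ∧
        -- (ii) `tr_i Ĉ` has the same eigenvalues (with multiplicity) as `tr_i C`
        (∃ σ₁ : Equiv.Perm (Fin d2),
            ∀ s, h1hat.eigenvalues s = htr1.eigenvalues (σ₁ s)) ∧
        (∃ σ₂ : Equiv.Perm (Fin d1),
            ∀ i, h2hat.eigenvalues i = htr2.eigenvalues (σ₂ i)) ∧
        -- (iii) the partial traces of `Ĉ` are diagonal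
        (ptrace1 ((U2 ⊗ₖ U1) * C * (U2 ⊗ₖ U1)ᴴ)).IsDiag ∧
        (ptrace2 ((U2 ⊗ₖ U1) * C * (U2 ⊗ₖ U1)ᴴ)).IsDiag ∧
        -- (iv) the eigenvalues of the partial traces of `C` are the corresponding sums of
        -- diagonal entries of `Ĉ`
        (∃ τ₁ : Equiv.Perm (Fin d2), ∀ i : Fin d2,
            (htr1.eigenvalues (τ₁ i) : ℂ) =
              ∑ s : Fin d1, ((U2 ⊗ₖ U1) * C * (U2 ⊗ₖ U1)ᴴ) (s, i) (s, i)) ∧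
        (∃ τ₂ : Equiv.Perm (Fin d1), ∀ j : Fin d1,
            (htr2.eigenvalues (τ₂ j) : ℂ) =
              ∑ s : Fin d2, ((U2 ⊗ₖ U1) * C * (U2 ⊗ₖ U1)ᴴ) (j, s) (j, s)) := by
  set U2 := star htr2.eigenvectorUnitary
  set U1 := star htr1.eigenvectorUnitary
  refine ⟨U2, U1, U2.2, U1.2, fun hChat h1hat h2hat => ?_⟩
  have hconj1 := ptrace1_kronecker_conj U2.2 U1 C
  have hconj2 := ptrace2_kronecker_conj U2 U1.2 C
  have hdiag1 := hconj1.trans htr1.star_eigenvectorUnitary_conj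
  have hdiag2 := hconj2.trans htr2.star_eigenvectorUnitary_conj
  refine ⟨⟨1, congrFun (hChat.eigenvalues_eq_of_conj hC (kronecker_mem_unitary U2.2 U1.2) rfl)⟩,
    ⟨1, congrFun (h1hat.eigenvalues_eq_of_conj htr1 U1.2 hconj1)⟩,
    ⟨1, congrFun (h2hat.eigenvalues_eq_of_conj htr2 U2.2 hconj2)⟩,
    hdiag1 ▸ isDiag_diagonal _, hdiag2 ▸ isDiag_diagonal _,
    ⟨1, fun i => ((congrFun₂ hdiag1 i i).trans (diagonal_apply_eq _ i)).symm⟩,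
    ⟨1, fun j => ((congrFun₂ hdiag2 j j).trans (diagonal_apply_eq _ j)).symm⟩⟩

/-- **Local Diagonalization Lemma.** -/
theorem local_diagonalization (d1 d2 : ℕ) (hd1 : 1 ≤ d1) (hd2 : 1 ≤ d2)
    (C : Matrix (Fin d1 × Fin d2) (Fin d1 × Fin d2) ℂ) (hC : C.IsHermitian)
    (htr1 : (ptrace1 C).IsHermitian) (htr2 : (ptrace2 C).IsHermitian) :
    ∃ (U2 : Matrix (Fin d1) (Fin d1) ℂ) (U1 : Matrix (Fin d2) (Fin d2) ℂ),
      U2 ∈ Matrix.unitaryGroup (Fin d1) ℂ ∧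
      U1 ∈ Matrix.unitaryGroup (Fin d2) ℂ ∧
      ∀ (hChat : ((U2 ⊗ₖ U1) * C * (U2 ⊗ₖ U1)ᴴ).IsHermitian)
        (h1hat : (ptrace1 ((U2 ⊗ₖ U1) * C * (U2 ⊗ₖ U1)ᴴ)).IsHermitian)
        (h2hat : (ptrace2 ((U2 ⊗ₖ U1) * C * (U2 ⊗ₖ U1)ᴴ)).IsHermitian),
        -- (i) `Ĉ` has the same eigenvalues (with multiplicity) as `C`
        (∃ σ : Equiv.Perm (Fin d1 × Fin d2),
            ∀ k, hChat.eigenvalues k = hC.eigenvalues (σ k)) ∧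
        -- (ii) `tr_i Ĉ` has the same eigenvalues (with multiplicity) as `tr_i C`
        (∃ σ₁ : Equiv.Perm (Fin d2),
            ∀ s, h1hat.eigenvalues s = htr1.eigenvalues (σ₁ s)) ∧
        (∃ σ₂ : Equiv.Perm (Fin d1),
            ∀ i, h2hat.eigenvalues i = htr2.eigenvalues (σ₂ i)) ∧
        -- (iii) the partial traces of `Ĉ` are diagonal
        (ptrace1 ((U2 ⊗ₖ U1) * C * (U2 ⊗ₖ U1)ᴴ)).IsDiag ∧
        (ptrace2 ((U2 ⊗ₖ U1) * C * (U2 ⊗ₖ U1)ᴴ)).IsDiag ∧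
        -- (iv) the eigenvalues of the partial traces of `C` are the corresponding sums of
        -- diagonal entries of `Ĉ`
        (∃ τ₁ : Equiv.Perm (Fin d2), ∀ i : Fin d2,
            (htr1.eigenvalues (τ₁ i) : ℂ) =
              ∑ s : Fin d1, ((U2 ⊗ₖ U1) * C * (U2 ⊗ₖ U1)ᴴ) (s, i) (s, i)) ∧
        (∃ τ₂ : Equiv.Perm (Fin d1), ∀ j : Fin d1,
            (htr2.eigenvalues (τ₂ j) : ℂ) =
              ∑ s : Fin d2, ((U2 ⊗ₖ U1) * C * (U2 ⊗ₖ U1)ᴴ) (j, s) (j, s)) :=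
  local_diagonalization_general d1 d2 C hC htr1 htr2
end

section
/- Let C be a Hermitian matrix on ℂ^{d1}⊗ℂ^{d2} with eigenvalues λ1 ≥ λ2 ≥ … ≥ λ_{d1d2}. Then λ(tr_2[C]) is majorized by the vector (Σ_{s=1}^{d2} λ_{(j−1)d2+s})_{j=1}^{d1} ∈ ℝ^{d1} (the sums of consecutive blocks of d2 eigenvalues, i.e. λ(tr_2[Λ]) for Λ the diagonal matrix of eigenvalues in decreasing order), and λ(tr_1[C]) is majorized by the vector (Σ_{s=1}^{d1} λ_{(i−1)d1+s})_{i=1}^{d2} ∈ ℝ^{d2} (the sums of consecutive blocks of d1 eigenvalues). -/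
open Matrix Finset Kronecker
open scoped ComplexOrder

/-!
Let `B = tr₂ C` and let `A` index `k` eigenvalues of `B`. For the spectral projection `P` of `B`
onto them, `∑_{a ∈ A} λ_a(B) = tr (P B) = tr ((P ⊗ 1) C)`, and `P ⊗ 1` is a projection of rank
`k d₂`. By Ky Fan's maximum principle, `tr (Q C)` is at most the sum of the `rank Q` largest
eigenvalues of `C` for every projection `Q`; here these are the first `k` blocks of `d₂`. In an
eigenbasis of `C`, Ky Fan's principle is the bathtub inequality `∑ qᵢ μᵢ ≤ μ₁ + ⋯ + μₘ` for
weights `qᵢ ∈ [0, 1]` summing to `m`, the weights being the diagonal entries of `Q`.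
The case of `tr₁` is the same with `1 ⊗ P` in place of `P ⊗ 1`.
-/

section maxSum

variable {ι : Type*} [Fintype ι] (x : ι → ℝ) {k : ℕ}

lemma bddAbove_sums_of_card_eq :
    BddAbove {s : ℝ | ∃ A : Finset ι, A.card = k ∧ s = ∑ i ∈ A, x i} :=
  ((Set.finite_range fun A : Finset ι => ∑ i ∈ A, x i).subset
    (by rintro _ ⟨A, -, rfl⟩; exact ⟨A, rfl⟩)).bddAbove

lemma sum_le_maxSum {A : Finset ι} (hA : A.card = k) : ∑ i ∈ A, x i ≤ maxSum x k :=
  le_csSup (bddAbove_sums_of_card_eq x) ⟨A, hA, rfl⟩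

lemma maxSum_le {b : ℝ} (hk : k ≤ Fintype.card ι)
    (h : ∀ A : Finset ι, A.card = k → ∑ i ∈ A, x i ≤ b) : maxSum x k ≤ b := by
  obtain ⟨A, -, hA⟩ := Finset.exists_subset_card_eq (s := univ) (n := k) (by simpa using hk)
  exact csSup_le ⟨_, A, hA, rfl⟩ (by rintro _ ⟨B, hB, rfl⟩; exact h B hB)

lemma maxSum_of_card_lt (hk : Fintype.card ι < k) : maxSum x k = 0 := by
  rw [maxSum, ← Real.sSup_empty]
  congr
  refine Set.eq_empty_of_forall_notMem ?_
  rintro _ ⟨A, hA, -⟩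
  exact absurd A.card_le_univ (by omega)

end maxSum

section Bathtub

variable {ι : Type*} [Fintype ι] {μ q : ι → ℝ}

theorem sum_mul_le_sum_of_threshold (S : Finset ι) {c : ℝ} (hS : ∀ i ∈ S, c ≤ μ i)
    (hSc : ∀ i ∉ S, μ i ≤ c) (hq : ∀ i, q i ∈ Set.Icc 0 1) (hsum : ∑ i, q i = S.card) :
    ∑ i, q i * μ i ≤ ∑ i ∈ S, μ i := by
  classical
  have key : ∑ i, q i * (μ i - c) ≤ ∑ i, if i ∈ S then μ i - c else 0 := by
    refine sum_le_sum fun i _ => ?_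
    obtain ⟨hq0, hq1⟩ := hq i
    split_ifs with hi
    · nlinarith [hS i hi]
    · nlinarith [hSc i hi]
  rw [sum_ite_mem, univ_inter] at key
  simp only [mul_sub, sum_sub_distrib, ← sum_mul, hsum, sum_const, nsmul_eq_mul] at key
  linarith

theorem sum_mul_le_sum_of_forall_le (S : Finset ι) (hS : ∀ i ∈ S, ∀ j ∉ S, μ j ≤ μ i)
    (hq : ∀ i, q i ∈ Set.Icc 0 1) (hsum : ∑ i, q i = S.card) :
    ∑ i, q i * μ i ≤ ∑ i ∈ S, μ i := by
  rcases S.eq_empty_or_nonempty with rfl | hne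
  · refine sum_mul_le_sum_of_threshold ∅ (c := ∑ i, |μ i|) (by simp) (fun i _ => ?_) hq hsum
    exact (le_abs_self _).trans (single_le_sum (fun j _ => abs_nonneg (μ j)) (mem_univ i))
  · exact sum_mul_le_sum_of_threshold S (fun i hi => S.inf'_le μ hi)
      (fun j hj => le_inf' hne μ fun i hi => hS i hi j hj) hq hsum

end Bathtub

theorem IsStarProjection.kronecker {R m n : Type*} [CommRing R] [StarRing R] [Fintype m]
    [Fintype n] {P : Matrix m m R} {Q : Matrix n n R} (hP : IsStarProjection P)
    (hQ : IsStarProjection Q) : IsStarProjection (P ⊗ₖ Q) := by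
  rw [isStarProjection_iff'] at *
  rw [← mul_kronecker_mul, hP.1, hQ.1, star_eq_conjTranspose, conjTranspose_kronecker,
    ← star_eq_conjTranspose, ← star_eq_conjTranspose, hP.2, hQ.2]
  exact ⟨rfl, rfl⟩

theorem isStarProjection_diagonal_indicator {R n : Type*} [Semiring R] [StarRing R] [Fintype n]
    [DecidableEq n] (A : Finset n) :
    IsStarProjection (diagonal fun i => if i ∈ A then (1 : R) else 0) := by
  rw [isStarProjection_iff', diagonal_mul_diagonal, star_eq_conjTranspose, diagonal_conjTranspose]
  constructor <;> congr 1 <;> ext i <;> by_cases i ∈ A <;> simp [*]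

theorem trace_conjStarAlgAut {R n : Type*} [CommRing R] [StarRing R] [Fintype n] [DecidableEq n]
    (u : unitary (Matrix n n R)) (M : Matrix n n R) :
    (Unitary.conjStarAlgAut R _ u M).trace = M.trace := by
  rw [Unitary.conjStarAlgAut_apply, trace_mul_comm, ← Matrix.mul_assoc, Unitary.coe_star_mul_self,
    Matrix.one_mul]

section Spectral

open scoped MatrixOrder

variable {𝕜 : Type*} [RCLike 𝕜] {n : Type*} [Fintype n] [DecidableEq n]

theorem IsStarProjection.re_diag_mem_Icc {R : Matrix n n 𝕜} (hR : IsStarProjection R) (i : n) :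
    RCLike.re (R i i) ∈ Set.Icc 0 1 := by
  have h0 := (RCLike.nonneg_iff.mp (hR.nonneg.posSemidef.diag_nonneg (i := i))).1
  have h1 := (RCLike.nonneg_iff.mp (hR.one_sub_nonneg.posSemidef.diag_nonneg (i := i))).1
  simp only [Matrix.sub_apply, one_apply_eq, map_sub, RCLike.one_re, sub_nonneg] at h1
  exact ⟨h0, h1⟩

theorem exists_isStarProjection_trace_mul_eq_sum_eigenvalues {B : Matrix n n 𝕜}
    (hB : B.IsHermitian) (A : Finset n) :
    ∃ P : Matrix n n 𝕜, IsStarProjection P ∧ P.trace = A.card ∧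
      (P * B).trace = ∑ i ∈ A, (hB.eigenvalues i : 𝕜) := by
  set φ := Unitary.conjStarAlgAut 𝕜 _ hB.eigenvectorUnitary
  refine ⟨φ (diagonal fun i => if i ∈ A then 1 else 0),
    (isStarProjection_diagonal_indicator A).map φ, ?_, ?_⟩
  · rw [trace_conjStarAlgAut, trace_diagonal, sum_boole, filter_mem_eq_inter, univ_inter]
  · conv_lhs => rw [hB.spectral_theorem, ← map_mul]
    rw [trace_conjStarAlgAut, diagonal_mul_diagonal, trace_diagonal]
    simp [sum_ite_mem]

/-- **Ky Fan's maximum principle**, for projections. -/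
theorem re_trace_mul_le_sum_eigenvalues {C Q : Matrix n n 𝕜} (hC : C.IsHermitian)
    (hQ : IsStarProjection Q) (S : Finset n)
    (hS : ∀ i ∈ S, ∀ j ∉ S, hC.eigenvalues j ≤ hC.eigenvalues i)
    (hcard : (S.card : 𝕜) = Q.trace) :
    RCLike.re (Q * C).trace ≤ ∑ i ∈ S, hC.eigenvalues i := by
  set φ := Unitary.conjStarAlgAut 𝕜 _ (star hC.eigenvectorUnitary)
  have hQC : (Q * C).trace = ∑ i, φ Q i i * hC.eigenvalues i := by
    rw [← trace_conjStarAlgAut (star hC.eigenvectorUnitary), map_mul,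
      hC.conjStarAlgAut_star_eigenvectorUnitary, Matrix.trace]
    exact sum_congr rfl fun i _ => by rw [diag_apply, mul_diagonal]; rfl
  have htrace : ∑ i, RCLike.re (φ Q i i) = S.card := by
    rw [← map_sum]
    change RCLike.re (φ Q).trace = _
    rw [trace_conjStarAlgAut, ← hcard, RCLike.natCast_re]
  refine (le_of_eq ?_).trans
    (sum_mul_le_sum_of_forall_le S hS (hQ.map φ).re_diag_mem_Icc htrace)
  simp [hQC, map_sum]

end Spectral

theorem finProdFinEquiv_lt_of_fst_lt {m n : ℕ} {a b : Fin m × Fin n} (h : a.1 < b.1) :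
    finProdFinEquiv a < finProdFinEquiv b := by
  have := Nat.mul_le_mul_left n (Fin.lt_def.mp h)
  rw [Fin.lt_def, finProdFinEquiv_apply_val, finProdFinEquiv_apply_val]
  rw [Nat.mul_succ] at this
  omega

/-- `B` is a compression of `C` of multiplicity `e` (e.g. `B = tr₂ C` with `e = d₂`). -/
theorem majorizes_blockSums_of_compression {𝕜 ι : Type*} [RCLike 𝕜] [Fintype ι]
    [DecidableEq ι] {d e : ℕ} {B : Matrix (Fin d) (Fin d) 𝕜} {C : Matrix ι ι 𝕜}
    (hB : B.IsHermitian) (hC : C.IsHermitian) (htrace : B.trace = C.trace)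
    (hcompress : ∀ P, IsStarProjection P →
      ∃ Q, IsStarProjection Q ∧ Q.trace = (e : 𝕜) * P.trace ∧ (Q * C).trace = (P * B).trace)
    {μ : Fin (d * e) → ℝ} (hμ : Antitone μ) (g : Fin (d * e) ≃ ι)
    (hg : ∀ k, μ k = hC.eigenvalues (g k)) :
    Majorizes hB.eigenvalues fun j : Fin d => ∑ s : Fin e, μ (finProdFinEquiv (j, s)) := by
  have hν p : hC.eigenvalues (g (finProdFinEquiv p)) = μ (finProdFinEquiv p) := (hg _).symm
  refine ⟨fun k => ?_, ?_⟩
  · rcases lt_or_ge d k with hdk | hkd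
    · rw [maxSum_of_card_lt _ (by simpa), maxSum_of_card_lt _ (by simpa)]
    set top : Finset (Fin d) := univ.filter fun j => (j : ℕ) < k
    have htop : top.card = k := by simp [top, Fin.card_filter_val_lt, hkd]
    set S := (top ×ˢ univ).map (finProdFinEquiv.trans g).toEmbedding
    have hS : ∑ i ∈ S, hC.eigenvalues i = ∑ j ∈ top, ∑ s : Fin e, μ (finProdFinEquiv (j, s)) := by
      simp [S, sum_product, hν]
    refine (maxSum_le _ (by simpa) fun A hA => ?_).trans (hS ▸ sum_le_maxSum _ htop)
    obtain ⟨P, hP, hPtr, hPB⟩ := exists_isStarProjection_trace_mul_eq_sum_eigenvalues hB A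
    obtain ⟨Q, hQ, hQtr, hQC⟩ := hcompress P hP
    have hupper : ∀ i ∈ S, ∀ j ∉ S, hC.eigenvalues j ≤ hC.eigenvalues i := by
      intro i hi j hj
      obtain ⟨a, ha, rfl⟩ := mem_map.mp hi
      obtain ⟨b, rfl⟩ := (finProdFinEquiv.trans g).surjective j
      have hb : b ∉ top ×ˢ univ := fun hb => hj (mem_map_of_mem _ hb)
      simp only [top, mem_product, mem_filter, mem_univ, true_and, and_true] at ha hb
      simp only [Equiv.coe_toEmbedding, Equiv.trans_apply, hν]
      exact hμ (finProdFinEquiv_lt_of_fst_lt (Fin.lt_def.mpr (by omega))).le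
    have hcard : (S.card : 𝕜) = Q.trace := by
      rw [hQtr, hPtr, hA, card_map, card_product, htop, card_univ, Fintype.card_fin]
      push_cast
      ring
    have hKyFan := re_trace_mul_le_sum_eigenvalues hC hQ S hupper hcard
    rw [hQC, hPB] at hKyFan
    simpa using hKyFan
  · have hsum : ∑ i, hC.eigenvalues i = ∑ j, ∑ s, μ (finProdFinEquiv (j, s)) := by
      rw [← Fintype.sum_prod_type', ← (finProdFinEquiv.trans g).sum_comp]
      simp only [Equiv.trans_apply, hν]
    rw [← hsum]
    have htraces := hB.trace_eq_sum_eigenvalues.symm.trans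
      (htrace.trans hC.trace_eq_sum_eigenvalues)
    exact_mod_cast htraces

section PartialTrace

variable {d1 d2 : ℕ} (C : Matrix (Fin d1 × Fin d2) (Fin d1 × Fin d2) ℂ)

theorem trace_ptrace1 : (ptrace1 C).trace = C.trace := by
  simp only [Matrix.trace, diag_apply, ptrace1, of_apply, Fintype.sum_prod_type]
  exact sum_comm

theorem trace_ptrace2 : (ptrace2 C).trace = C.trace := by
  simp only [Matrix.trace, diag_apply, ptrace2, of_apply, Fintype.sum_prod_type]

theorem trace_one_kronecker_mul (P : Matrix (Fin d2) (Fin d2) ℂ) :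
    (((1 : Matrix (Fin d1) (Fin d1) ℂ) ⊗ₖ P) * C).trace = (P * ptrace1 C).trace := by
  simp only [Matrix.trace, diag_apply, mul_apply, kroneckerMap_apply, one_apply, ite_mul, one_mul,
    zero_mul, Fintype.sum_prod_type, sum_ite_irrel, sum_const_zero, sum_ite_eq, mem_univ,
    ↓reduceIte, ptrace1, of_apply, mul_sum]
  rw [sum_comm]
  exact sum_congr rfl fun _ _ => sum_comm

theorem trace_kronecker_one_mul (P : Matrix (Fin d1) (Fin d1) ℂ) :
    ((P ⊗ₖ (1 : Matrix (Fin d2) (Fin d2) ℂ)) * C).trace = (P * ptrace2 C).trace := by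
  simp only [Matrix.trace, diag_apply, mul_apply, kroneckerMap_apply, one_apply, mul_ite, mul_one,
    mul_zero, ite_mul, zero_mul, Fintype.sum_prod_type, sum_ite_eq, mem_univ, ↓reduceIte, ptrace2,
    of_apply, mul_sum]
  exact sum_congr rfl fun _ _ => sum_comm

end PartialTrace

theorem single_ptrace_majorization (d1 d2 : ℕ)
    (C : Matrix (Fin d1 × Fin d2) (Fin d1 × Fin d2) ℂ) (hC : C.IsHermitian)
    (htr1 : (ptrace1 C).IsHermitian) (htr2 : (ptrace2 C).IsHermitian)
    -- `μ` lists the eigenvalues of `C` in decreasing order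
    (μ : Fin (d1 * d2) → ℝ) (hμ : Antitone μ)
    (g : Fin (d1 * d2) ≃ Fin d1 × Fin d2) (hg : ∀ k, μ k = hC.eigenvalues (g k)) :
    Majorizes htr2.eigenvalues
      (fun j : Fin d1 => ∑ s : Fin d2, μ (finProdFinEquiv (j, s))) ∧
    Majorizes htr1.eigenvalues
      (fun i : Fin d2 => ∑ s : Fin d1, μ (finCongr (Nat.mul_comm d2 d1) (finProdFinEquiv (i, s)))) := by
  constructor
  · refine majorizes_blockSums_of_compression htr2 hC (trace_ptrace2 C) (fun P hP => ?_) hμ g hg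
    refine ⟨P ⊗ₖ 1, hP.kronecker (.one _), ?_, trace_kronecker_one_mul C P⟩
    rw [trace_kronecker, trace_one, Fintype.card_fin, mul_comm]
  · refine majorizes_blockSums_of_compression (μ := μ ∘ finCongr (Nat.mul_comm d2 d1)) htr1 hC
      (trace_ptrace1 C) (fun P hP => ?_) (hμ.comp_monotone fun _ _ h => h)
      ((finCongr (Nat.mul_comm d2 d1)).trans g) fun k => hg _
    refine ⟨1 ⊗ₖ P, (IsStarProjection.one _).kronecker hP, ?_, trace_one_kronecker_mul C P⟩
    rw [trace_kronecker, trace_one, Fintype.card_fin]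
end
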